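/- For any two smooth symmetric tensor fields γ¹ and γ² on Minkowski space, the current j^c := γ²_{ab} Π^{cab}(γ¹) − γ¹_{ab} Π^{cab}(γ²) satisfies ∂_c j^c = γ²_{ab} L^{ab}(γ¹) − γ¹_{ab} L^{ab}(γ²), where L^{ab}(γ) := η^{ac} η^{bd} L_{cd}(γ). In particular, if both γ¹ and γ² solve the linearized Einstein equation L(γⁱ) = 0, then the current j is divergence-free. -/

import Mathlib

noncomputable section

/-- The Minkowski metric η = diag(−1,1,1,1) in components (it is its own inverse,
so `eta` also serves as η^{ab}). -/
def eta (a b : Fin 4) : ℝ := if a = b then (if a = 0 then -1 else 1) else 0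

/-- The coordinate partial derivative ∂_a of a scalar function on ℝ⁴. -/
def pd (a : Fin 4) (f : (Fin 4 → ℝ) → ℝ) : (Fin 4 → ℝ) → ℝ :=
  fun x => fderiv ℝ f x (Pi.single a 1)

/-- The raised-index derivative ∂^a = η^{ab} ∂_b. -/
def pdUp (a : Fin 4) (f : (Fin 4 → ℝ) → ℝ) : (Fin 4 → ℝ) → ℝ :=
  fun x => ∑ b, eta a b * pd b f x

/-- A tensor field on Minkowski space: components `γ a b`, each a scalar function on ℝ⁴. -/
abbrev Tensor := Fin 4 → Fin 4 → (Fin 4 → ℝ) → ℝ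

/-- The trace γ = η^{ab} γ_{ab}. -/
def trT (γ : Tensor) : (Fin 4 → ℝ) → ℝ := fun x => ∑ a, ∑ b, eta a b * γ a b x

/-- The wave operator □ = η^{ab} ∂_a ∂_b. -/
def box (f : (Fin 4 → ℝ) → ℝ) : (Fin 4 → ℝ) → ℝ :=
  fun x => ∑ a, ∑ b, eta a b * pd a (pd b f) x

/-- The trace reversal γ̄_{ab} = γ_{ab} − (1/2) η_{ab} γ. -/
def trRev (γ : Tensor) : Tensor :=
  fun a b x => γ a b x - (1/2) * eta a b * trT γ x

/-- The flat linearized Einstein operator (Λ = 0):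
L_{ab}(γ) = −(1/2)η_{ab}(∂^c∂^d γ_{cd} − □γ) − (1/2)□γ_{ab} − (1/2)∂_a∂_b γ
            + (1/2)∂^c∂_a γ_{bc} + (1/2)∂^c∂_b γ_{ac}. -/
def linE (γ : Tensor) : Tensor := fun a b x =>
  -(1/2) * eta a b * ((∑ c, ∑ d, pdUp c (pdUp d (γ c d)) x) - box (trT γ) x)
  - (1/2) * box (γ a b) x - (1/2) * pd a (pd b (trT γ)) x
  + (1/2) * ∑ c, pdUp c (pd a (γ b c)) x
  + (1/2) * ∑ c, pdUp c (pd b (γ a c)) x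

/-- Index raising: γ^{ab} = η^{ac} η^{bd} γ_{cd}. -/
def upT (γ : Tensor) : Tensor := fun a b x => ∑ c, ∑ d, eta a c * eta b d * γ c d x

/-- The conjugate momentum
Π^{abc}(γ) = −(1/2)∂^a γ^{bc} + (1/2)η^{bc}∂^a γ − (1/2)η^{bc}∂_d γ^{ad}
             − (1/4)η^{ac}∂^b γ − (1/4)η^{ab}∂^c γ + (1/2)∂^b γ^{ac} + (1/2)∂^c γ^{ab}. -/
def mom (γ : Tensor) (a b c : Fin 4) : (Fin 4 → ℝ) → ℝ := fun x =>
  -(1/2) * pdUp a (upT γ b c) x + (1/2) * eta b c * pdUp a (trT γ) x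
  - (1/2) * eta b c * (∑ d, pd d (upT γ a d) x)
  - (1/4) * eta a c * pdUp b (trT γ) x - (1/4) * eta a b * pdUp c (trT γ) x
  + (1/2) * pdUp b (upT γ a c) x + (1/2) * pdUp c (upT γ a b) x

/-- The flat linearized Einstein tensor with raised indices: L^{ab} = η^{ac}η^{bd} L_{cd}. -/
def linEUp (γ : Tensor) : Tensor := fun a b x => ∑ c, ∑ d, eta a c * eta b d * linE γ c d x

/-- The current j^c(γ¹,γ²) = γ²_{ab} Π^{cab}(γ¹) − γ¹_{ab} Π^{cab}(γ²). -/
def current (γ1 γ2 : Tensor) (c : Fin 4) : (Fin 4 → ℝ) → ℝ := fun x =>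
  (∑ a, ∑ b, γ2 a b x * mom γ1 c a b x) - ∑ a, ∑ b, γ1 a b x * mom γ2 c a b x

/-!
STATEMENT 7: for any two smooth symmetric tensor fields γ¹, γ² on Minkowski space,
∂_c j^c = γ²_{ab} L^{ab}(γ¹) − γ¹_{ab} L^{ab}(γ²); in particular if both solve the
linearized Einstein equation then j is divergence-free.
-/


/-! ### Auxiliary calculus lemmas for `pd` -/

theorem ContDiff.pd' {f : (Fin 4 → ℝ) → ℝ} (hf : ContDiff ℝ (⊤ : ℕ∞) f) (a : Fin 4) :
    ContDiff ℝ (⊤ : ℕ∞) (pd a f) := by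
  unfold pd
  exact (hf.fderiv_right (by simp)).clm_apply contDiff_const

theorem pd_comm {f : (Fin 4 → ℝ) → ℝ} (hf : ContDiff ℝ (⊤ : ℕ∞) f) (a b : Fin 4) :
    pd a (pd b f) = pd b (pd a f) := by
  funext x
  unfold pd
  have hd : Differentiable ℝ (fderiv ℝ f) := (hf.fderiv_right (m := (⊤ : ℕ∞)) (by simp)).differentiable (by simp)
  have h2 : ∀ v : Fin 4 → ℝ, fderiv ℝ (fun y => fderiv ℝ f y v) x
      = ((fderiv ℝ f x).comp (fderiv ℝ (fun _ : Fin 4 → ℝ => v) x))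
        + (fderiv ℝ (fderiv ℝ f) x).flip v :=
    fun v => fderiv_clm_apply (hd x) (differentiableAt_const v)
  simp only [h2, fderiv_fun_const, Pi.zero_apply, ContinuousLinearMap.comp_zero,
    ContinuousLinearMap.zero_apply, zero_add, ContinuousLinearMap.add_apply,
    ContinuousLinearMap.flip_apply]
  exact (hf.contDiffAt.isSymmSndFDerivAt (by rw [minSmoothness_of_isRCLikeNormedField]; exact WithTop.coe_le_coe.mpr le_top)).eq _ _

theorem pd_add {f g : (Fin 4 → ℝ) → ℝ} (hf : Differentiable ℝ f) (hg : Differentiable ℝ g)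
    (a : Fin 4) : pd a (fun y => f y + g y) = fun y => pd a f y + pd a g y := by
  funext x; unfold pd; rw [fderiv_fun_add (hf x) (hg x)]; rfl

theorem pd_neg (f : (Fin 4 → ℝ) → ℝ) (a : Fin 4) :
    pd a (fun y => -f y) = fun y => -pd a f y := by
  funext x; unfold pd; rw [fderiv_fun_neg]; rfl

theorem pd_sub {f g : (Fin 4 → ℝ) → ℝ} (hf : Differentiable ℝ f) (hg : Differentiable ℝ g)
    (a : Fin 4) : pd a (fun y => f y - g y) = fun y => pd a f y - pd a g y := by
  funext x; unfold pd; rw [fderiv_fun_sub (hf x) (hg x)]; rfl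

theorem pd_const_mul {f : (Fin 4 → ℝ) → ℝ} (hf : Differentiable ℝ f) (c : ℝ)
    (a : Fin 4) : pd a (fun y => c * f y) = fun y => c * pd a f y := by
  funext x; unfold pd; rw [fderiv_const_mul (hf x)]; rfl

theorem pd_mul {f g : (Fin 4 → ℝ) → ℝ} (hf : Differentiable ℝ f) (hg : Differentiable ℝ g)
    (a : Fin 4) : pd a (fun y => f y * g y) = fun y => pd a f y * g y + f y * pd a g y := by
  funext x; unfold pd; rw [fderiv_fun_mul (hf x) (hg x)]
  simp only [ContinuousLinearMap.add_apply, ContinuousLinearMap.smul_apply, smul_eq_mul]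
  ring

theorem pd_zero (a : Fin 4) : pd a (fun _ => (0:ℝ)) = fun _ => 0 := by
  funext x; unfold pd; rw [fderiv_fun_const]; rfl

theorem pd_sum {ι : Type*} (s : Finset ι) (F : ι → (Fin 4 → ℝ) → ℝ)
    (hf : ∀ i ∈ s, Differentiable ℝ (F i)) (a : Fin 4) :
    pd a (fun y => ∑ i ∈ s, F i y) = fun y => ∑ i ∈ s, pd a (F i) y := by
  funext x; unfold pd; rw [fderiv_fun_sum (fun i hi => (hf i hi) x)]; simp

@[fun_prop]
theorem pd_contDiff {f : (Fin 4 → ℝ) → ℝ} (hf : ContDiff ℝ (⊤ : ℕ∞) f) (a : Fin 4) :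
    ContDiff ℝ (⊤ : ℕ∞) (pd a f) := hf.pd' a

@[fun_prop]
theorem pd_differentiable {f : (Fin 4 → ℝ) → ℝ} (hf : ContDiff ℝ (⊤ : ℕ∞) f) (a : Fin 4) :
    Differentiable ℝ (pd a f) := (hf.pd' a).differentiable (by simp)

theorem mom_contDiff (γ : Tensor) (hs : ∀ a b, ContDiff ℝ (⊤ : ℕ∞) (γ a b)) (c a b : Fin 4) :
    ContDiff ℝ (⊤ : ℕ∞) (mom γ c a b) := by
  unfold mom pdUp upT trT
  simp only [Fin.sum_univ_four]
  fun_prop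

theorem mom_differentiable (γ : Tensor) (hs : ∀ a b, ContDiff ℝ (⊤ : ℕ∞) (γ a b)) (c a b : Fin 4) :
    Differentiable ℝ (mom γ c a b) := (mom_contDiff γ hs c a b).differentiable (by simp)

set_option maxHeartbeats 4000000 in
/-- Divergence of the conjugate momentum equals the raised linearized Einstein tensor. -/
theorem divMom (γ : Tensor) (hs : ∀ a b, ContDiff ℝ (⊤ : ℕ∞) (γ a b))
    (hsymm : ∀ a b x, γ a b x = γ b a x) (a b : Fin 4) (x : Fin 4 → ℝ) :
    ∑ c, pd c (mom γ c a b) x = linEUp γ a b x := by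
  have hd : ∀ a b, Differentiable ℝ (γ a b) := fun a b => (hs a b).differentiable (by simp)
  have hdp : ∀ c a b, Differentiable ℝ (pd c (γ a b)) :=
    fun c a b => ((hs a b).pd' c).differentiable (by simp)
  have e10 : γ 1 0 = γ 0 1 := funext (hsymm 1 0)
  have e20 : γ 2 0 = γ 0 2 := funext (hsymm 2 0)
  have e30 : γ 3 0 = γ 0 3 := funext (hsymm 3 0)
  have e21 : γ 2 1 = γ 1 2 := funext (hsymm 2 1)
  have e31 : γ 3 1 = γ 1 3 := funext (hsymm 3 1)
  have e32 : γ 3 2 = γ 2 3 := funext (hsymm 3 2)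
  have k10 : ∀ i j, pd 1 (pd 0 (γ i j)) = pd 0 (pd 1 (γ i j)) := fun i j => pd_comm (hs i j) 1 0
  have k20 : ∀ i j, pd 2 (pd 0 (γ i j)) = pd 0 (pd 2 (γ i j)) := fun i j => pd_comm (hs i j) 2 0
  have k30 : ∀ i j, pd 3 (pd 0 (γ i j)) = pd 0 (pd 3 (γ i j)) := fun i j => pd_comm (hs i j) 3 0
  have k21 : ∀ i j, pd 2 (pd 1 (γ i j)) = pd 1 (pd 2 (γ i j)) := fun i j => pd_comm (hs i j) 2 1
  have k31 : ∀ i j, pd 3 (pd 1 (γ i j)) = pd 1 (pd 3 (γ i j)) := fun i j => pd_comm (hs i j) 3 1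
  have k32 : ∀ i j, pd 3 (pd 2 (γ i j)) = pd 2 (pd 3 (γ i j)) := fun i j => pd_comm (hs i j) 3 2
  fin_cases a <;> fin_cases b <;>
  · unfold mom linEUp linE box pdUp upT trT
    simp +decide only [Fin.sum_univ_four, eta, if_true, if_false, neg_mul, one_mul, zero_mul,
      mul_zero, add_zero, zero_add, neg_neg, e10, e20, e30, e21, e31, e32]
    simp (disch := fun_prop) only [pd_add, pd_sub, pd_neg, pd_const_mul, pd_zero,
      e10, e20, e30, e21, e31, e32]
    simp only [k10, k20, k30, k21, k31, k32]
    ring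

set_option maxHeartbeats 1600000 in
/-- Symmetry of the cross term `∂_c γ²_{ab} Π^{cab}(γ¹)` under `γ¹ ↔ γ²`. -/
theorem crossSym (γ1 γ2 : Tensor)
    (hs1 : ∀ a b, ContDiff ℝ (⊤ : ℕ∞) (γ1 a b)) (hs2 : ∀ a b, ContDiff ℝ (⊤ : ℕ∞) (γ2 a b))
    (hsymm1 : ∀ a b x, γ1 a b x = γ1 b a x) (hsymm2 : ∀ a b x, γ2 a b x = γ2 b a x)
    (x : Fin 4 → ℝ) :
    (∑ c, ∑ a, ∑ b, pd c (γ2 a b) x * mom γ1 c a b x)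
      = ∑ c, ∑ a, ∑ b, pd c (γ1 a b) x * mom γ2 c a b x := by
  have hd : ∀ a b, Differentiable ℝ (γ1 a b) := fun a b => (hs1 a b).differentiable (by simp)
  have hd2 : ∀ a b, Differentiable ℝ (γ2 a b) := fun a b => (hs2 a b).differentiable (by simp)
  have e10 : γ1 1 0 = γ1 0 1 := funext (hsymm1 1 0)
  have e20 : γ1 2 0 = γ1 0 2 := funext (hsymm1 2 0)
  have e30 : γ1 3 0 = γ1 0 3 := funext (hsymm1 3 0)
  have e21 : γ1 2 1 = γ1 1 2 := funext (hsymm1 2 1)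
  have e31 : γ1 3 1 = γ1 1 3 := funext (hsymm1 3 1)
  have e32 : γ1 3 2 = γ1 2 3 := funext (hsymm1 3 2)
  have f10 : γ2 1 0 = γ2 0 1 := funext (hsymm2 1 0)
  have f20 : γ2 2 0 = γ2 0 2 := funext (hsymm2 2 0)
  have f30 : γ2 3 0 = γ2 0 3 := funext (hsymm2 3 0)
  have f21 : γ2 2 1 = γ2 1 2 := funext (hsymm2 2 1)
  have f31 : γ2 3 1 = γ2 1 3 := funext (hsymm2 3 1)
  have f32 : γ2 3 2 = γ2 2 3 := funext (hsymm2 3 2)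
  unfold mom pdUp upT trT
  simp +decide only [Fin.sum_univ_four, eta, if_true, if_false, neg_mul, one_mul, zero_mul,
    mul_zero, add_zero, zero_add, neg_neg, e10, e20, e30, e21, e31, e32,
    f10, f20, f30, f21, f31, f32]
  simp (disch := fun_prop) only [pd_add, pd_sub, pd_neg, pd_const_mul, pd_zero,
    e10, e20, e30, e21, e31, e32, f10, f20, f30, f21, f31, f32]
  ring

theorem sum_comm3 (F : Fin 4 → Fin 4 → Fin 4 → ℝ) :
    ∑ c, ∑ a, ∑ b, F c a b = ∑ a, ∑ b, ∑ c, F c a b := by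
  rw [Finset.sum_comm]
  exact Finset.sum_congr rfl fun a _ => Finset.sum_comm

set_option maxHeartbeats 1600000 in
theorem stmt_7 (γ1 γ2 : Tensor)
    (hsmooth1 : ∀ a b, ContDiff ℝ (⊤ : ℕ∞) (γ1 a b))
    (hsmooth2 : ∀ a b, ContDiff ℝ (⊤ : ℕ∞) (γ2 a b))
    (hsymm1 : ∀ a b x, γ1 a b x = γ1 b a x)
    (hsymm2 : ∀ a b x, γ2 a b x = γ2 b a x) :
    (∀ x, (∑ c, pd c (current γ1 γ2 c) x)
        = (∑ a, ∑ b, γ2 a b x * linEUp γ1 a b x)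
          - ∑ a, ∑ b, γ1 a b x * linEUp γ2 a b x) ∧
    ((∀ a b x, linE γ1 a b x = 0) → (∀ a b x, linE γ2 a b x = 0) →
      ∀ x, (∑ c, pd c (current γ1 γ2 c) x) = 0) := by
  have hm1 : ∀ c a b, Differentiable ℝ (mom γ1 c a b) := mom_differentiable γ1 hsmooth1
  have hm2 : ∀ c a b, Differentiable ℝ (mom γ2 c a b) := mom_differentiable γ2 hsmooth2
  have hd1 : ∀ a b, Differentiable ℝ (γ1 a b) := fun a b => (hsmooth1 a b).differentiable (by simp)
  have hd2 : ∀ a b, Differentiable ℝ (γ2 a b) := fun a b => (hsmooth2 a b).differentiable (by simp)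
  have main : ∀ x, (∑ c, pd c (current γ1 γ2 c) x)
      = (∑ a, ∑ b, γ2 a b x * linEUp γ1 a b x)
        - ∑ a, ∑ b, γ1 a b x * linEUp γ2 a b x := by
    intro x
    have dI1 : ∀ c a, Differentiable ℝ (fun y => ∑ b, γ2 a b y * mom γ1 c a b y) :=
      fun c a => Differentiable.fun_sum fun b _ => (hd2 a b).mul (hm1 c a b)
    have dI2 : ∀ c a, Differentiable ℝ (fun y => ∑ b, γ1 a b y * mom γ2 c a b y) :=
      fun c a => Differentiable.fun_sum fun b _ => (hd1 a b).mul (hm2 c a b)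
    have dS1 : ∀ c, Differentiable ℝ (fun y => ∑ a, ∑ b, γ2 a b y * mom γ1 c a b y) :=
      fun c => Differentiable.fun_sum fun a _ => dI1 c a
    have dS2 : ∀ c, Differentiable ℝ (fun y => ∑ a, ∑ b, γ1 a b y * mom γ2 c a b y) :=
      fun c => Differentiable.fun_sum fun a _ => dI2 c a
    have step : ∀ c, pd c (current γ1 γ2 c) x
        = (∑ a, ∑ b, (pd c (γ2 a b) x * mom γ1 c a b x + γ2 a b x * pd c (mom γ1 c a b) x))
          - ∑ a, ∑ b, (pd c (γ1 a b) x * mom γ2 c a b x + γ1 a b x * pd c (mom γ2 c a b) x) := by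
      intro c
      unfold current
      rw [pd_sub (dS1 c) (dS2 c)]
      rw [pd_sum _ _ (fun a _ => dI1 c a), pd_sum _ _ (fun a _ => dI2 c a)]
      refine congrArg₂ (· - ·) (Finset.sum_congr rfl fun a _ => ?_)
        (Finset.sum_congr rfl fun a _ => ?_)
      · rw [pd_sum _ _ (fun b _ => (hd2 a b).fun_mul (hm1 c a b))]
        exact Finset.sum_congr rfl fun b _ => by
          rw [pd_mul (hd2 a b) (hm1 c a b)]
      · rw [pd_sum _ _ (fun b _ => (hd1 a b).fun_mul (hm2 c a b))]
        exact Finset.sum_congr rfl fun b _ => by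
          rw [pd_mul (hd1 a b) (hm2 c a b)]
    calc ∑ c, pd c (current γ1 γ2 c) x
        = (∑ c, ∑ a, ∑ b, (pd c (γ2 a b) x * mom γ1 c a b x + γ2 a b x * pd c (mom γ1 c a b) x))
          - ∑ c, ∑ a, ∑ b, (pd c (γ1 a b) x * mom γ2 c a b x + γ1 a b x * pd c (mom γ2 c a b) x) := by
          simp only [step, Finset.sum_sub_distrib]
      _ = ((∑ c, ∑ a, ∑ b, pd c (γ2 a b) x * mom γ1 c a b x)
            + ∑ c, ∑ a, ∑ b, γ2 a b x * pd c (mom γ1 c a b) x)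
          - ((∑ c, ∑ a, ∑ b, pd c (γ1 a b) x * mom γ2 c a b x)
            + ∑ c, ∑ a, ∑ b, γ1 a b x * pd c (mom γ2 c a b) x) := by
          simp only [Finset.sum_add_distrib]
      _ = (∑ a, ∑ b, γ2 a b x * linEUp γ1 a b x)
          - ∑ a, ∑ b, γ1 a b x * linEUp γ2 a b x := by
          rw [crossSym γ1 γ2 hsmooth1 hsmooth2 hsymm1 hsymm2 x]
          rw [sum_comm3 (fun c a b => γ2 a b x * pd c (mom γ1 c a b) x),
              sum_comm3 (fun c a b => γ1 a b x * pd c (mom γ2 c a b) x)]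
          have h1 : ∀ a b : Fin 4, ∑ c, γ2 a b x * pd c (mom γ1 c a b) x
              = γ2 a b x * linEUp γ1 a b x := fun a b => by
            rw [← Finset.mul_sum, divMom γ1 hsmooth1 hsymm1 a b x]
          have h2 : ∀ a b : Fin 4, ∑ c, γ1 a b x * pd c (mom γ2 c a b) x
              = γ1 a b x * linEUp γ2 a b x := fun a b => by
            rw [← Finset.mul_sum, divMom γ2 hsmooth2 hsymm2 a b x]
          simp only [h1, h2]
          ring
  refine ⟨main, fun h1 h2 x => ?_⟩
  have z1 : ∀ a b : Fin 4, linEUp γ1 a b x = 0 := fun a b => by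
    unfold linEUp
    simp [h1, Finset.sum_const_zero]
  have z2 : ∀ a b : Fin 4, linEUp γ2 a b x = 0 := fun a b => by
    unfold linEUp
    simp [h2, Finset.sum_const_zero]
  rw [main x]
  simp [z1, z2]
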